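/- arXiv:0911.0404 — 6 statements merged into one kernel-verified Lean document; each statement's English description precedes it below -/
import Mathlib

section
/- Let A and B be finite abelian groups whose orders are coprime. Then the Helly dimension of the direct product satisfies κ(A × B) = max{κ(A), κ(B)}. -/
/-!
If `|A|` and `|B|` are coprime, the Chinese remainder theorem gives `k` with `(a, b) ^ k = (a, 1)`,
so every subgroup of `A × B`, hence every coset, is the product of its two projections. A system of
product cosets has empty intersection iff one of its two coordinate systems does, so a common Helly
bound of `A` and `B` bounds `A × B`. Conversely a Helly bound passes to any quotient, since
preimages of cosets under a surjective homomorphism are cosets.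
-/

open Pointwise

/-- `C` is a left coset in the group `G`, i.e. a set of the form `g • H`
for some subgroup `H` of `G`. -/
def IsLeftCoset {G : Type*} [Group G] (C : Set G) : Prop :=
  ∃ (g : G) (H : Subgroup G), C = g • (H : Set G)

/-- `d` is a Helly bound for the group `G`: every finite system of left cosets
of `G` with empty intersection contains a subsystem of at most `d` cosets with
empty intersection. -/
def IsHellyBound (G : Type*) [Group G] (d : ℕ) : Prop :=
  ∀ (m : ℕ) (C : Fin m → Set G), (∀ i, IsLeftCoset (C i)) → (⋂ i, C i) = ∅ →
    ∃ s : Finset (Fin m), s.card ≤ d ∧ (⋂ i ∈ s, C i) = ∅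

/-- The Helly dimension `κ(G)` of a group `G`: the minimal natural number `d`
which is a Helly bound for `G`, and `∞` if there is no such `d`. -/
noncomputable def hellyDim (G : Type*) [Group G] : ℕ∞ :=
  sInf {d : ℕ∞ | ∃ n : ℕ, d = (n : ℕ∞) ∧ IsHellyBound G n}

section Helly

variable {G K : Type*} [Group G] [Group K]

lemma IsHellyBound.mono {m n : ℕ} (h : IsHellyBound G m) (hmn : m ≤ n) : IsHellyBound G n :=
  fun k C hC hI => (h k C hC hI).imp fun _ hs => ⟨hs.1.trans hmn, hs.2⟩

lemma hellyDim_le_natCast_iff {n : ℕ} : hellyDim G ≤ n ↔ IsHellyBound G n := by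
  refine ⟨fun h => ?_, fun h => sInf_le ⟨n, rfl, h⟩⟩
  obtain ⟨_, ⟨k, rfl, hk⟩, hkn⟩ :=
    sInf_lt_iff.1 ((ENat.lt_add_one_iff (ENat.natCast_ne_top n)).2 h)
  exact hk.mono (by exact_mod_cast (ENat.lt_add_one_iff (ENat.natCast_ne_top n)).1 hkn)

lemma IsLeftCoset.preimage (f : G →* K) (hf : Function.Surjective f) {C : Set K}
    (hC : IsLeftCoset C) : IsLeftCoset (f ⁻¹' C) := by
  obtain ⟨k, H, rfl⟩ := hC
  obtain ⟨g, rfl⟩ := hf k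
  refine ⟨g, H.comap f, ?_⟩
  ext x
  simp [Set.mem_smul_set_iff_inv_smul_mem]

lemma IsHellyBound.of_surjective {n : ℕ} (f : G →* K) (hf : Function.Surjective f)
    (h : IsHellyBound G n) : IsHellyBound K n := by
  intro m C hC hI
  obtain ⟨s, hs, hsI⟩ := h m (fun i => f ⁻¹' C i) (fun i => (hC i).preimage f hf)
    (by rw [← Set.preimage_iInter, hI, Set.preimage_empty])
  refine ⟨s, hs, ?_⟩
  rw [← Set.preimage_iInter₂] at hsI
  exact hf.preimage_injective (hsI.trans Set.preimage_empty.symm)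

lemma IsHellyBound.exists_biInter_eq_empty_of_subset_preimage {X : Type*} {m n : ℕ}
    (h : IsHellyBound G n) (f : X → G) {C : Fin m → Set X} {D : Fin m → Set G}
    (hD : ∀ i, IsLeftCoset (D i)) (hI : ⋂ i, D i = ∅) (hCD : ∀ i, C i ⊆ f ⁻¹' D i) :
    ∃ s : Finset (Fin m), s.card ≤ n ∧ ⋂ i ∈ s, C i = ∅ := by
  obtain ⟨s, hs, hsI⟩ := h m D hD hI
  refine ⟨s, hs, Set.subset_empty_iff.1 ?_⟩
  calc ⋂ i ∈ s, C i ⊆ f ⁻¹' ⋂ i ∈ s, D i := by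
        rw [Set.preimage_iInter₂]
        exact Set.iInter₂_mono fun i _ => hCD i
    _ = ∅ := by rw [hsI, Set.preimage_empty]

end Helly

section Prod

variable {A B : Type*} [Group A] [Group B]

lemma smul_coe_subgroupProd (g : A × B) (H : Subgroup A) (K : Subgroup B) :
    g • (H.prod K : Set (A × B)) = (g.1 • (H : Set A)) ×ˢ (g.2 • (K : Set B)) := by
  ext x
  simp only [Set.mem_smul_set_iff_inv_smul_mem, Set.mem_prod, SetLike.mem_coe, Subgroup.mem_prod]
  rfl

lemma IsHellyBound.prod {n : ℕ}
    (hprod : ∀ H : Subgroup (A × B),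
      H = (H.map (MonoidHom.fst A B)).prod (H.map (MonoidHom.snd A B)))
    (hA : IsHellyBound A n) (hB : IsHellyBound B n) : IsHellyBound (A × B) n := by
  intro m C hC hI
  choose g H hgH using hC
  set CA : Fin m → Set A := fun i => (g i).1 • (H i).map (MonoidHom.fst A B)
  set CB : Fin m → Set B := fun i => (g i).2 • (H i).map (MonoidHom.snd A B)
  have hC : ∀ i, C i = CA i ×ˢ CB i := fun i => by
    rw [hgH, hprod (H i), smul_coe_subgroupProd]
  have hI' : (⋂ i, CA i) ×ˢ (⋂ i, CB i) = ∅ := by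
    rw [← hI]
    ext
    simp [hC, forall_and]
  rcases Set.prod_eq_empty_iff.1 hI' with hIA | hIB
  · exact hA.exists_biInter_eq_empty_of_subset_preimage Prod.fst (fun _ => ⟨_, _, rfl⟩) hIA
      fun i => (hC i).trans_subset (Set.prod_subset_preimage_fst _ _)
  · exact hB.exists_biInter_eq_empty_of_subset_preimage Prod.snd (fun _ => ⟨_, _, rfl⟩) hIB
      fun i => (hC i).trans_subset (Set.prod_subset_preimage_snd _ _)

lemma Subgroup.mk_fst_one_mem_of_coprime [Fintype A] [Fintype B]
    (h : (Fintype.card A).Coprime (Fintype.card B)) {H : Subgroup (A × B)} {x : A × B}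
    (hx : x ∈ H) : (x.1, (1 : B)) ∈ H := by
  obtain ⟨k, hkA, hkB⟩ := Nat.chineseRemainder h 1 0
  have hA : x.1 ^ k = x.1 ^ 1 :=
    pow_eq_pow_iff_modEq.2 (Nat.ModEq.of_dvd orderOf_dvd_card hkA)
  have hB : x.2 ^ k = x.2 ^ 0 :=
    pow_eq_pow_iff_modEq.2 (Nat.ModEq.of_dvd orderOf_dvd_card hkB)
  have hxk : x ^ k = (x.1, 1) := Prod.ext (by simpa using hA) (by simpa using hB)
  exact hxk ▸ pow_mem hx k

lemma Subgroup.eq_prod_map_fst_map_snd_of_coprime [Fintype A] [Fintype B]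
    (h : (Fintype.card A).Coprime (Fintype.card B)) (H : Subgroup (A × B)) :
    H = (H.map (MonoidHom.fst A B)).prod (H.map (MonoidHom.snd A B)) := by
  refine le_antisymm (le_prod_iff.2 ⟨le_rfl, le_rfl⟩) ?_
  rintro ⟨_, _⟩ ⟨⟨x, hx, rfl⟩, ⟨y, hy, rfl⟩⟩
  have hy' : ((1 : A), y.2) = (y.1, 1)⁻¹ * y := by ext <;> simp
  have := mul_mem (mk_fst_one_mem_of_coprime h hx)
    (hy' ▸ mul_mem (inv_mem (mk_fst_one_mem_of_coprime h hy)) hy)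
  simpa using this

end Prod

/-- Let `A` and `B` be finite abelian groups of coprime order.  Then
`κ(A × B) = max {κ(A), κ(B)}`. -/
theorem hellyDim_prod_of_coprime (A B : Type*) [CommGroup A] [CommGroup B]
    [Fintype A] [Fintype B] (h : Nat.Coprime (Fintype.card A) (Fintype.card B)) :
    hellyDim (A × B) = max (hellyDim A) (hellyDim B) := by
  refine eq_of_forall_ge_iff fun c => ?_
  induction c using ENat.recTopCoe with
  | top => simp
  | coe n =>
    rw [max_le_iff, hellyDim_le_natCast_iff, hellyDim_le_natCast_iff, hellyDim_le_natCast_iff]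
    exact ⟨fun hn => ⟨hn.of_surjective (MonoidHom.fst A B) Prod.fst_surjective,
        hn.of_surjective (MonoidHom.snd A B) Prod.snd_surjective⟩,
      fun hAB => hAB.1.prod (Subgroup.eq_prod_map_fst_map_snd_of_coprime h) hAB.2⟩
end

section
/- Let k be an algebraically closed (or merely infinite) field of characteristic p > 0, and let d be any natural number. Then there exist finitely many cosets of finite additive subgroups of (k, +) whose total intersection is empty, but such that any d of them have nonempty intersection. Consequently, the additive group of k has no finite Helly dimension. -/
/-!
In `𝔽_p^(d+1)` the `d + 2` affine hyperplanes `x j = 1` and `∑ j, x j = d + 2` have no common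
point, because on the first `d + 1` of them the coordinate sum is `d + 1`; yet dropping any one of
them leaves a common point (`1`, or `1 + Pi.single j 1`). They are cosets of finite subgroups. An
infinite field of characteristic `p` is an infinite-dimensional `𝔽_p`-vector space, so it contains
an injective linear image of `𝔽_p^(d+1)`, which carries this system of cosets into the field.
-/

open Pointwise

/-- `C` is a coset in the additive group `G`, i.e. a set of the form `a + H`
for some additive subgroup `H` of `G`. -/
def IsAddCoset {G : Type*} [AddGroup G] (C : Set G) : Prop :=
  ∃ (a : G) (H : AddSubgroup G), C = a +ᵥ (H : Set G)

/-- `d` is a Helly bound for the additive group `G`: every finite system of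
cosets of `G` with empty intersection contains a subsystem of at most `d`
cosets with empty intersection. -/
def IsAddHellyBound (G : Type*) [AddGroup G] (d : ℕ) : Prop :=
  ∀ (m : ℕ) (C : Fin m → Set G), (∀ i, IsAddCoset (C i)) → (⋂ i, C i) = ∅ →
    ∃ s : Finset (Fin m), s.card ≤ d ∧ (⋂ i ∈ s, C i) = ∅

/-- The Helly dimension `κ(G)` of an additive group `G`. -/
noncomputable def addHellyDim (G : Type*) [AddGroup G] : ℕ∞ :=
  sInf {d : ℕ∞ | ∃ n : ℕ, d = (n : ℕ∞) ∧ IsAddHellyBound G n}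

def IsFiniteAddCoset {G : Type*} [AddGroup G] (C : Set G) : Prop :=
  ∃ (a : G) (H : AddSubgroup G), (H : Set G).Finite ∧ C = a +ᵥ (H : Set G)

def IsAddHellyWitness {G ι : Type*} [AddGroup G] (d : ℕ) (C : ι → Set G) : Prop :=
  (∀ i, IsFiniteAddCoset (C i)) ∧ (⋂ i, C i) = ∅ ∧
    ∀ s : Finset ι, s.card ≤ d → (⋂ i ∈ s, C i).Nonempty

section Cosets

variable {G G' M : Type*} [AddGroup G] [AddGroup G'] [AddGroup M]

theorem AddMonoidHom.preimage_singleton_eq_vadd_ker (f : G →+ M) (a : G) :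
    f ⁻¹' {f a} = a +ᵥ (f.ker : Set G) := by
  ext x
  simp only [Set.mem_preimage, Set.mem_singleton_iff, Set.mem_vadd_set, SetLike.mem_coe,
    AddMonoidHom.mem_ker, vadd_eq_add]
  constructor
  · intro hx
    exact ⟨-a + x, by simp [hx], add_neg_cancel_left a x⟩
  · rintro ⟨y, hy, rfl⟩
    simp [hy]

theorem isFiniteAddCoset_preimage_singleton [Finite G] (f : G →+ M) (a : G) :
    IsFiniteAddCoset (f ⁻¹' {f a}) :=
  ⟨a, f.ker, Set.toFinite _, f.preimage_singleton_eq_vadd_ker a⟩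

theorem IsFiniteAddCoset.image {C : Set G} (hC : IsFiniteAddCoset C) (φ : G →+ G') :
    IsFiniteAddCoset (φ '' C) := by
  obtain ⟨a, H, hH, rfl⟩ := hC
  refine ⟨φ a, H.map φ, ?_, ?_⟩
  · rw [AddSubgroup.coe_map]
    exact hH.image φ
  · rw [Set.image_vadd_distrib, AddSubgroup.coe_map]

end Cosets

section HellyWitness

variable {G G' ι : Type*} [AddGroup G] [AddGroup G'] {d : ℕ} {C : ι → Set G}

theorem IsAddHellyWitness.mono {d' : ℕ} (h : IsAddHellyWitness d C) (hd : d' ≤ d) :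
    IsAddHellyWitness d' C :=
  ⟨h.1, h.2.1, fun s hs => h.2.2 s (hs.trans hd)⟩

theorem IsAddHellyWitness.image (h : IsAddHellyWitness d C) {φ : G →+ G'}
    (hφ : Function.Injective φ) : IsAddHellyWitness d (fun i => φ '' C i) := by
  obtain ⟨hcoset, hempty, hmeet⟩ := h
  refine ⟨fun i => (hcoset i).image φ, ?_, fun s hs => ?_⟩
  · have : Nonempty ι := by
      by_contra hι
      simp [not_nonempty_iff.mp hι] at hempty
    rw [← hφ.injOn.image_iInter_eq, hempty, Set.image_empty]
  · exact ((hmeet s hs).image φ).mono (Set.image_iInter₂_subset _ _)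

theorem IsAddHellyWitness.not_isAddHellyBound {m : ℕ} {C : Fin m → Set G}
    (h : IsAddHellyWitness d C) : ¬ IsAddHellyBound G d := fun hd => by
  obtain ⟨s, hs, hempty⟩ := hd m C (fun i => (h.1 i).imp fun _ ⟨H, _, hC⟩ => ⟨H, hC⟩) h.2.1
  exact (h.2.2 s hs).ne_empty hempty

theorem addHellyDim_eq_top (h : ∀ d, ¬ IsAddHellyBound G d) : addHellyDim G = ⊤ := by
  rw [addHellyDim, sInf_eq_top]
  rintro _ ⟨d, -, hd⟩
  exact absurd hd (h d)

end HellyWitness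

section HellyFamily

variable (R : Type*) [Ring R] (n : ℕ)

def hellyFamily : Fin (n + 2) → Set (Fin (n + 1) → R) :=
  Fin.lastCases {x | ∑ j, x j = n + 2} fun j => {x | x j = 1}

variable {R n}

@[simp]
theorem mem_hellyFamily_castSucc {j : Fin (n + 1)} {x : Fin (n + 1) → R} :
    x ∈ hellyFamily R n j.castSucc ↔ x j = 1 := by
  rw [hellyFamily, Fin.lastCases_castSucc, Set.mem_ofPred_eq]

@[simp]
theorem mem_hellyFamily_last {x : Fin (n + 1) → R} :
    x ∈ hellyFamily R n (Fin.last _) ↔ ∑ j, x j = n + 2 := by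
  rw [hellyFamily, Fin.lastCases_last, Set.mem_ofPred_eq]

theorem iInter_hellyFamily [Nontrivial R] : (⋂ i, hellyFamily R n i) = ∅ := by
  refine Set.eq_empty_of_forall_notMem fun x hx => ?_
  rw [Set.mem_iInter, Fin.forall_fin_succ'] at hx
  obtain ⟨hones, hsum⟩ := hx
  simp only [mem_hellyFamily_castSucc] at hones
  simp only [mem_hellyFamily_last, hones, Finset.sum_const, Finset.card_univ, Fintype.card_fin,
    nsmul_eq_mul, mul_one, Nat.cast_add, Nat.cast_one] at hsum
  rw [← one_add_one_eq_two, ← add_assoc, left_eq_add] at hsum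
  exact one_ne_zero hsum

theorem nonempty_iInter_hellyFamily_ne (i₀ : Fin (n + 2)) :
    (⋂ (i) (_ : i ≠ i₀), hellyFamily R n i).Nonempty := by
  induction i₀ using Fin.lastCases with
  | last =>
    refine ⟨1, Set.mem_iInter₂.mpr fun i hi => ?_⟩
    obtain ⟨j, rfl⟩ := Fin.eq_castSucc_of_ne_last hi
    simp
  | cast j₀ =>
    refine ⟨1 + Pi.single j₀ 1, Set.mem_iInter₂.mpr fun i hi => ?_⟩
    induction i using Fin.lastCases with
    | last =>
      simp [Finset.sum_add_distrib, add_assoc, one_add_one_eq_two]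
    | cast j =>
      simp [Pi.single_eq_of_ne ((Fin.castSucc_injective _).ne_iff.mp hi)]

theorem isFiniteAddCoset_hellyFamily [Finite R] (i : Fin (n + 2)) :
    IsFiniteAddCoset (hellyFamily R n i) := by
  induction i using Fin.lastCases with
  | last =>
    let f : (Fin (n + 1) → R) →+ R := ∑ j, Pi.evalAddMonoidHom (fun _ => R) j
    have hf : hellyFamily R n (Fin.last _) = f ⁻¹' {f (Pi.single 0 (n + 2))} := by
      ext x
      simp [f]
    exact hf ▸ isFiniteAddCoset_preimage_singleton f _
  | cast j =>
    let f : (Fin (n + 1) → R) →+ R := Pi.evalAddMonoidHom (fun _ => R) j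
    have hf : hellyFamily R n j.castSucc = f ⁻¹' {f 1} := by
      ext x
      simp [f]
    exact hf ▸ isFiniteAddCoset_preimage_singleton f _

theorem isAddHellyWitness_hellyFamily [Finite R] [Nontrivial R] :
    IsAddHellyWitness (n + 1) (hellyFamily R n) := by
  refine ⟨isFiniteAddCoset_hellyFamily, iInter_hellyFamily, fun s hs => ?_⟩
  obtain ⟨i₀, -, hi₀⟩ := Finset.exists_mem_notMem_of_card_lt_card (s := s) (t := Finset.univ)
    (by simp only [Finset.card_univ, Fintype.card_fin]; omega)
  obtain ⟨x, hx⟩ := nonempty_iInter_hellyFamily_ne (R := R) i₀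
  exact ⟨x, Set.mem_iInter₂.mpr fun i hi => Set.mem_iInter₂.mp hx i (ne_of_mem_of_not_mem hi hi₀)⟩

end HellyFamily

theorem exists_injective_linearMap_pi_of_infinite (F V : Type*) [DivisionRing F] [Finite F]
    [AddCommGroup V] [Module F V] [Infinite V] (n : ℕ) :
    ∃ φ : (Fin n → F) →ₗ[F] V, Function.Injective φ := by
  have hinf : ¬ Module.Finite F V := fun _ => @not_finite V _ (Module.finite_of_finite F)
  have hrank : Cardinal.aleph0 ≤ Module.rank F V :=
    not_lt.mp (Module.rank_lt_aleph0_iff.not.mpr hinf)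
  obtain ⟨v, hv⟩ := exists_linearIndependent_of_le_rank
    ((Cardinal.natCast_lt_aleph0 (n := n)).le.trans hrank)
  exact ⟨_, hv.fintypeLinearCombination_injective⟩

/-- Let `k` be an infinite field of characteristic `p > 0` and let `d` be any
natural number.  Then there are finitely many cosets of finite additive
subgroups of `(k, +)` with empty total intersection such that any `d` of them
have nonempty intersection.  Consequently, the additive group of `k` has no
finite Helly dimension: `κ(k, +) = ∞`. -/
theorem addHellyDim_infinite_of_charP (k : Type*) [Field k] [Infinite k]
    (p : ℕ) (hp : p.Prime) [CharP k p] :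
    (∀ d : ℕ, ∃ (m : ℕ) (C : Fin m → Set k),
      (∀ i, ∃ (a : k) (H : AddSubgroup k), (H : Set k).Finite ∧ C i = a +ᵥ (H : Set k)) ∧
      (⋂ i, C i) = ∅ ∧
      (∀ s : Finset (Fin m), s.card ≤ d → (⋂ i ∈ s, C i).Nonempty)) ∧
    addHellyDim k = ⊤ := by
  have := Fact.mk hp
  let _ := ZMod.algebra k p
  have hwitness (d : ℕ) : ∃ (m : ℕ) (C : Fin m → Set k), IsAddHellyWitness d C := by
    obtain ⟨φ, hφ⟩ := exists_injective_linearMap_pi_of_infinite (ZMod p) k (d + 1)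
    exact ⟨_, _, (isAddHellyWitness_hellyFamily.image (φ := φ.toAddMonoidHom) hφ).mono d.le_succ⟩
  refine ⟨hwitness, addHellyDim_eq_top fun d => ?_⟩
  obtain ⟨m, C, hC⟩ := hwitness d
  exact hC.not_isAddHellyBound
end

section
/- For each natural number n ≥ 1, let C_n = {x ∈ ℤ : x ≡ Σ_{i=0}^{n-1} 2^{2^i} (mod 2^{2^n})}, a coset of the subgroup 2^{2^n}ℤ of (ℤ, +). Then C_1 ⊇ C_2 ⊇ C_3 ⊇ ⋯ is a descending chain of nonempty cosets (so every finite subfamily of {C_n} has nonempty intersection), yet the intersection ⋂_{n≥1} C_n is empty. -/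
/-!
The partial sums `s n = ∑_{i<n} 2^{2^i}` satisfy `s m ≡ s n (mod 2^{2^n})` for `n ≤ m`, so the
cosets `C n = s n + 2^{2^n} ℤ` are nested and all contain `s (max s)` for a finite index set `s`.
A common point `x` of all of them is impossible: since `2 s n ≤ 2^{2^n}`, once `2|x| < 2^{2^n}` the
congruence `x ≡ s n (mod 2^{2^n})` forces `x = s n`, and then `x - s (n+1) = -2^{2^n}` is not
divisible by `2^{2^{n+1}}`.
-/

open Finset

lemma pow_dvd_sum_Ico_pow {R : Type*} [CommSemiring R] (a : R) {f : ℕ → ℕ} (hf : Monotone f)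
    (n m : ℕ) : a ^ f n ∣ ∑ i ∈ Ico n m, a ^ f i :=
  dvd_sum fun _ hi => pow_dvd_pow a (hf (mem_Ico.1 hi).1)

lemma Antitone.biInter_finset_nonempty {ι α : Type*} [SemilatticeSup ι] [OrderBot ι]
    {C : ι → Set α} (hC : Antitone C) (hne : ∀ i, (C i).Nonempty) (s : Finset ι) :
    (⋂ i ∈ s, C i).Nonempty :=
  let ⟨x, hx⟩ := hne (s.sup id)
  ⟨x, Set.mem_iInter₂.2 fun _ hi => hC (le_sup (f := id) hi) hx⟩

def towerSum (n : ℕ) : ℤ := ∑ i ∈ range n, 2 ^ 2 ^ i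

def towerCoset (n : ℕ) : Set ℤ := {x | 2 ^ 2 ^ n ∣ x - towerSum n}

lemma towerSum_succ (n : ℕ) : towerSum (n + 1) = towerSum n + 2 ^ 2 ^ n :=
  sum_range_succ _ n

lemma towerSum_nonneg (n : ℕ) : 0 ≤ towerSum n :=
  sum_nonneg fun _ _ => by positivity

lemma two_mul_towerSum_le {n : ℕ} (hn : 1 ≤ n) : 2 * towerSum n ≤ 2 ^ 2 ^ n := by
  induction n, hn using Nat.le_induction with
  | base => decide
  | succ n hn ih =>
    have hfour : (2 : ℤ) ^ 2 ≤ 2 ^ 2 ^ n :=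
      pow_le_pow_right₀ (by norm_num) (Nat.pow_le_pow_right two_pos hn)
    calc 2 * towerSum (n + 1) = 2 * towerSum n + 2 * 2 ^ 2 ^ n := by rw [towerSum_succ]; ring
      _ ≤ 2 ^ 2 ^ n * 2 ^ 2 ^ n := by nlinarith
      _ = 2 ^ 2 ^ (n + 1) := by rw [← pow_add, pow_succ, mul_two]

lemma pow_two_pow_dvd_towerSum_sub {n m : ℕ} (hnm : n ≤ m) :
    (2 : ℤ) ^ 2 ^ n ∣ towerSum m - towerSum n := by
  rw [towerSum, towerSum, ← sum_Ico_eq_sub _ hnm]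
  exact pow_dvd_sum_Ico_pow 2 (fun _ _ => Nat.pow_le_pow_right two_pos) n m

lemma towerSum_mem_towerCoset (n : ℕ) : towerSum n ∈ towerCoset n := by
  simp [towerCoset]

lemma towerCoset_antitone : Antitone towerCoset := by
  intro n m hnm x hx
  have hpow : (2 : ℤ) ^ 2 ^ n ∣ 2 ^ 2 ^ m := pow_dvd_pow 2 (Nat.pow_le_pow_right two_pos hnm)
  rw [towerCoset, Set.mem_ofPred_eq, ← sub_add_sub_cancel x (towerSum m)]
  exact dvd_add (hpow.trans hx) (pow_two_pow_dvd_towerSum_sub hnm)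

lemma towerSum_notMem_towerCoset_succ (n : ℕ) : towerSum n ∉ towerCoset (n + 1) := by
  intro h
  rw [towerCoset, Set.mem_ofPred_eq, towerSum_succ, sub_add_cancel_left, dvd_neg,
    pow_dvd_pow_iff (by norm_num) (by decide)] at h
  exact absurd h (Nat.pow_lt_pow_right one_lt_two n.lt_succ_self).not_ge

lemma eq_towerSum_of_mem_towerCoset {x : ℤ} {n : ℕ} (hn : 1 ≤ n) (hx : 2 * |x| < 2 ^ 2 ^ n)
    (hxn : x ∈ towerCoset n) : x = towerSum n := by
  have hsum := two_mul_towerSum_le hn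
  have hlt : |x - towerSum n| < 2 ^ 2 ^ n := by
    rw [abs_lt]
    constructor <;> linarith [neg_abs_le x, le_abs_self x, towerSum_nonneg n]
  exact sub_eq_zero.1 (Int.eq_zero_of_abs_lt_dvd hxn hlt)

lemma biInter_towerCoset_eq_empty : ⋂ n ∈ {n : ℕ | 1 ≤ n}, towerCoset n = ∅ := by
  refine Set.eq_empty_of_forall_notMem fun x hx => ?_
  simp only [Set.mem_iInter, Set.mem_ofPred_eq] at hx
  set n := 2 * x.natAbs + 1
  have hn : 2 * x.natAbs < 2 ^ 2 ^ n :=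
    (Nat.lt_succ_self _).trans <| Nat.lt_two_pow_self.trans <|
      Nat.pow_lt_pow_right one_lt_two Nat.lt_two_pow_self
  have hx_small : 2 * |x| < 2 ^ 2 ^ n := by
    rw [Int.abs_eq_natAbs]; exact_mod_cast hn
  have hxs := eq_towerSum_of_mem_towerCoset (by omega) hx_small (hx n (by omega))
  exact towerSum_notMem_towerCoset_succ n (hxs ▸ hx (n + 1) (by omega))

/-- For `n ≥ 1` let `C_n = {x ∈ ℤ : x ≡ ∑_{i=0}^{n-1} 2^{2^i} (mod 2^{2^n})}`,
a coset of the subgroup `2^{2^n} ℤ`.  Then `C_1 ⊇ C_2 ⊇ ⋯` is a descending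
chain of nonempty cosets (in particular every finite subfamily has nonempty
intersection), but the intersection of all the `C_n` (for `n ≥ 1`) is empty. -/
theorem descending_cosets_empty_intersection (C : ℕ → Set ℤ)
    (hC : ∀ n, C n =
      {x : ℤ | (2 : ℤ) ^ (2 ^ n) ∣ x - ∑ i ∈ Finset.range n, (2 : ℤ) ^ (2 ^ i)}) :
    (∀ n, 1 ≤ n → C (n + 1) ⊆ C n) ∧
    (∀ n, 1 ≤ n → (C n).Nonempty) ∧
    (∀ s : Finset ℕ, (∀ n ∈ s, 1 ≤ n) → (⋂ n ∈ s, C n).Nonempty) ∧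
    (⋂ n ∈ {n : ℕ | 1 ≤ n}, C n) = ∅ := by
  obtain rfl : C = towerCoset := funext hC
  have hne : ∀ n, (towerCoset n).Nonempty := fun n => ⟨_, towerSum_mem_towerCoset n⟩
  exact ⟨fun n _ => towerCoset_antitone n.le_succ, fun n _ => hne n,
    fun s _ => towerCoset_antitone.biInter_finset_nonempty hne s, biInter_towerCoset_eq_empty⟩
end

section
/- Let N be a group with an abelian normal subgroup T of finite index, and set q = [N : T]. Assume that every element of T is a q-th power of an element of T, and that the subgroup E = {u ∈ T : u^q = 1} is finite. Then N contains a finite subgroup H such that N = H·T, i.e. every element of N can be written as h·t with h ∈ H and t ∈ T. -/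
/-!
The factor set `c` of a set-theoretic section of `N → N ⧸ T` is a 2-cocycle with values in the
abelian group `T`; taking the product of the cocycle identity over its last variable shows that
`c ^ q` is the coboundary of `b x = ∏ z, c x z`. Correcting the section by `q`-th roots of `b` gives
a section whose factor set takes values in the finite normal subgroup `E = T[q]`, so it becomes a
homomorphism `N ⧸ T →* N ⧸ E`, and the preimage in `N` of its image is the finite subgroup `H`.
-/

open scoped IsMulCommutative Pointwise

namespace Subgroup

variable {N : Type*} [Group N]

def torsionBy (T : Subgroup N) [IsMulCommutative T] (n : ℕ) : Subgroup N where
  carrier := {u | u ∈ T ∧ u ^ n = 1}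
  one_mem' := ⟨T.one_mem, one_pow n⟩
  mul_mem' := by
    rintro u v ⟨hu, hun⟩ ⟨hv, hvn⟩
    refine ⟨T.mul_mem hu hv, ?_⟩
    rw [Commute.mul_pow (setLike_mul_comm hu hv), hun, hvn, one_mul]
  inv_mem' := by
    rintro u ⟨hu, hun⟩
    exact ⟨T.inv_mem hu, by rw [inv_pow, hun, inv_one]⟩

variable (T : Subgroup N) [IsMulCommutative T] (n : ℕ)

lemma coe_torsionBy : (T.torsionBy n : Set N) = (↑) '' {u : T | u ^ n = 1} := by
  ext u
  constructor
  · rintro ⟨hu, hun⟩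
    exact ⟨⟨u, hu⟩, Subtype.ext hun, rfl⟩
  · rintro ⟨t, htn, rfl⟩
    exact ⟨t.2, by rw [← coe_pow, htn, coe_one]⟩

lemma coe_mem_torsionBy {t : T} : (t : N) ∈ T.torsionBy n ↔ t ^ n = 1 :=
  ⟨fun h => Subtype.ext h.2, fun h => ⟨t.2, by rw [← coe_pow, h, coe_one]⟩⟩

instance [T.Normal] : (T.torsionBy n).Normal where
  conj_mem u := by
    rintro ⟨hu, hun⟩ g
    exact ⟨Normal.conj_mem ‹_› u hu g, by rw [conj_pow, hun, mul_one, mul_inv_cancel]⟩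

end Subgroup

namespace QuotientGroup

variable {N : Type*} [Group N] {T : Subgroup N} [T.Normal]

noncomputable def outFactorSet (x y : N ⧸ T) : T :=
  ⟨x.out * y.out * (x * y).out⁻¹, by
    rw [← eq_one_iff, mk_mul, mk_mul, mk_inv, out_eq', out_eq', out_eq', mul_inv_cancel]⟩

lemma outFactorSet_mul_outFactorSet (x y z : N ⧸ T) :
    outFactorSet x y * outFactorSet (x * y) z =
      MulAut.conjNormal x.out (outFactorSet y z) * outFactorSet x (y * z) := by
  ext
  simp only [outFactorSet, Subgroup.coe_mul, MulAut.conjNormal_apply, mul_assoc x y z]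
  group

lemma outFactorSet_pow_index_mul_prod [IsMulCommutative T] [Fintype (N ⧸ T)] (x y : N ⧸ T) :
    outFactorSet x y ^ T.index * ∏ z, outFactorSet (x * y) z =
      MulAut.conjNormal x.out (∏ z, outFactorSet y z) * ∏ z, outFactorSet x z := by
  calc outFactorSet x y ^ T.index * ∏ z, outFactorSet (x * y) z
      = ∏ z, outFactorSet x y * outFactorSet (x * y) z := by
        rw [Finset.prod_mul_distrib, Finset.prod_const, Finset.card_univ,
          Subgroup.index_eq_card, Nat.card_eq_fintype_card]
    _ = ∏ z, MulAut.conjNormal x.out (outFactorSet y z) * outFactorSet x (y * z) :=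
        Finset.prod_congr rfl fun z _ => outFactorSet_mul_outFactorSet x y z
    _ = MulAut.conjNormal x.out (∏ z, outFactorSet y z) * ∏ z, outFactorSet x z := by
        rw [Finset.prod_mul_distrib, map_prod]
        exact congrArg _ (Equiv.prod_comp (Equiv.mulLeft y) (outFactorSet x))

theorem exists_section_mul_mul_inv_mem_torsionBy [IsMulCommutative T] [Finite (N ⧸ T)]
    (hdiv : ∀ t : T, ∃ s : T, s ^ T.index = t) :
    ∃ τ : N ⧸ T → N, (∀ x, (τ x : N ⧸ T) = x) ∧
      ∀ x y, τ x * τ y * (τ (x * y))⁻¹ ∈ T.torsionBy T.index := by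
  have := Fintype.ofFinite (N ⧸ T)
  choose a ha using fun x : N ⧸ T => hdiv (∏ z, outFactorSet x z)
  refine ⟨fun x => (a x)⁻¹ * x.out, fun x => ?_, fun x y => ?_⟩
  · rw [mk_mul, (eq_one_iff _).2 (a x)⁻¹.2, one_mul, out_eq']
  have hτ : ((a x)⁻¹ * x.out) * ((a y)⁻¹ * y.out) * ((a (x * y))⁻¹ * (x * y).out)⁻¹ =
      ((a x)⁻¹ * (MulAut.conjNormal x.out (a y))⁻¹ * outFactorSet x y * a (x * y) : T) := by
    simp only [outFactorSet, Subgroup.coe_mul, Subgroup.coe_inv, MulAut.conjNormal_apply]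
    group
  rw [hτ, Subgroup.coe_mem_torsionBy, mul_pow, mul_pow, mul_pow, inv_pow, inv_pow, ← map_pow, ha,
    ha, ha, mul_assoc _ (outFactorSet x y ^ _), outFactorSet_pow_index_mul_prod]
  group

end QuotientGroup

namespace Subgroup

variable {N : Type*} [Group N]

theorem exists_finite_mul_eq_of_section_mul_mul_inv_mem {T E : Subgroup N} [T.Normal] [E.Normal]
    [Finite (N ⧸ T)] (hE : (E : Set N).Finite) (τ : N ⧸ T → N) (hτ : ∀ x, (τ x : N ⧸ T) = x)
    (hτE : ∀ x y, τ x * τ y * (τ (x * y))⁻¹ ∈ E) :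
    ∃ H : Subgroup N, (H : Set N).Finite ∧ ∀ g : N, ∃ h ∈ H, ∃ t ∈ T, g = h * t := by
  let φ : N ⧸ T →* N ⧸ E :=
    { toFun x := τ x
      map_one' := by simpa using (QuotientGroup.eq_one_iff _).2 (hτE 1 1)
      map_mul' x y := .symm <| by
        simpa [mul_inv_eq_one] using (QuotientGroup.eq_one_iff _).2 (hτE x y) }
  refine ⟨φ.range.comap (QuotientGroup.mk' E), ?_, fun g => ⟨τ g, ⟨g, rfl⟩, (τ g)⁻¹ * g, ?_, ?_⟩⟩
  · have hH : (φ.range.comap (QuotientGroup.mk' E) : Set N) = Set.range τ * (E : Set N) := by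
      rw [← QuotientGroup.preimage_image_mk_eq_mul, ← Set.range_comp]
      rfl
    rw [hH]
    exact (Set.finite_range τ).mul hE
  · rw [← QuotientGroup.eq, hτ]
  · rw [mul_inv_cancel_left]

end Subgroup

/-- Let `N` be a group with an abelian normal subgroup `T` of finite index
`q = [N : T]`.  Assume every element of `T` is a `q`-th power in `T` and the
subgroup `E = {u ∈ T : u^q = 1}` is finite.  Then `N` contains a finite
subgroup `H` with `N = H · T`. -/
theorem finite_complement_of_divisible (N : Type*) [Group N]
    (T : Subgroup N) [T.Normal]
    (hcomm : ∀ x y : T, x * y = y * x)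
    (q : ℕ) (hq : q = T.index) (hqpos : 0 < q)
    (hdiv : ∀ t : T, ∃ s : T, s ^ q = t)
    (hE : {u : T | u ^ q = 1}.Finite) :
    ∃ H : Subgroup N, (H : Set N).Finite ∧
      ∀ g : N, ∃ h ∈ H, ∃ t ∈ T, g = h * t := by
  have : IsMulCommutative T := isMulCommutative_iff.2 hcomm
  have : T.FiniteIndex := ⟨by omega⟩
  subst hq
  obtain ⟨τ, hτ, hτE⟩ := QuotientGroup.exists_section_mul_mul_inv_mem_torsionBy hdiv
  exact Subgroup.exists_finite_mul_eq_of_section_mul_mul_inv_mem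
    (T.coe_torsionBy _ ▸ hE.image _) τ hτ hτE
end

section
/- In the additive topological group (ℝ, +) with its usual topology, let C_1, …, C_m be finitely many closed cosets (translates of closed additive subgroups of ℝ). If every subfamily of at most 3 of the cosets C_1, …, C_m has nonempty intersection, then the whole family has nonempty intersection: ⋂_{i=1}^m C_i ≠ ∅. In other words, κ(ℝ) ≤ 3. -/
open Pointwise

/-!
Every closed subgroup of `ℝ` is `ℝ` itself or cyclic. If all the cosets are `ℝ` there is nothing
to prove; otherwise one of them is `C₀ = a + ℤ g`, the image of the affine map `n ↦ a + n g`.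
Pulling every `Cᵢ` back along this map gives cosets of subgroups of `ℤ` which intersect pairwise,
because `Cᵢ ∩ Cⱼ ∩ C₀ ≠ ∅`. Since `gcd` distributes over `lcm`, the subgroup lattice of `ℤ` is
distributive, and for cosets of subgroups forming a distributive lattice pairwise intersection
already gives a common point (the Chinese remainder theorem for non-coprime moduli).
-/

theorem Nat.gcd_lcm_dvd_lcm_gcd (k m n : ℕ) : k.gcd (m.lcm n) ∣ (k.gcd m).lcm (k.gcd n) := by
  rcases eq_or_ne k 0 with rfl | hk
  · simp
  rcases eq_or_ne m 0 with rfl | hm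
  · simpa using Nat.dvd_lcm_left k (k.gcd n)
  rcases eq_or_ne n 0 with rfl | hn
  · simpa using Nat.dvd_lcm_right (k.gcd m) k
  have hkm : k.gcd m ≠ 0 := Nat.gcd_ne_zero_left hk
  have hkn : k.gcd n ≠ 0 := Nat.gcd_ne_zero_left hk
  rw [← Nat.factorization_le_iff_dvd (Nat.gcd_ne_zero_left hk) (Nat.lcm_ne_zero hkm hkn),
    Nat.factorization_gcd hk (Nat.lcm_ne_zero hm hn), Nat.factorization_lcm hm hn,
    Nat.factorization_lcm hkm hkn, Nat.factorization_gcd hk hm, Nat.factorization_gcd hk hn]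
  exact fun p ↦ (inf_sup_left _ _ _).le

theorem Int.addSubgroup_sup_inf_le (H K L : AddSubgroup ℤ) : (H ⊔ K) ⊓ (H ⊔ L) ≤ H ⊔ K ⊓ L := by
  obtain ⟨h, rfl⟩ := Int.subgroup_cyclic H
  obtain ⟨k, rfl⟩ := Int.subgroup_cyclic K
  obtain ⟨l, rfl⟩ := Int.subgroup_cyclic L
  simp only [← AddSubgroup.zmultiples_eq_closure, ← Int.zmultiples_natAbs h,
    ← Int.zmultiples_natAbs k, ← Int.zmultiples_natAbs l, Int.zmultiples_sup, Int.zmultiples_inf,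
    Int.gcd_natCast_natCast, Int.lcm_natCast_natCast, AddSubgroup.zmultiples_le,
    Int.mem_zmultiples_iff]
  exact Int.natCast_dvd_natCast.mpr (Nat.gcd_lcm_dvd_lcm_gcd _ _ _)

theorem Finset.inf_sup_le_sup_inf {α ι : Type*} [Lattice α] [OrderTop α] {a : α}
    (h : ∀ b c : α, (a ⊔ b) ⊓ (a ⊔ c) ≤ a ⊔ b ⊓ c) (s : Finset ι) (f : ι → α) :
    s.inf (fun i ↦ a ⊔ f i) ≤ a ⊔ s.inf f := by
  classical
  induction s using Finset.induction_on with
  | empty => simp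
  | insert i s _ ih =>
    rw [Finset.inf_insert, Finset.inf_insert]
    exact (inf_le_inf_left _ ih).trans (h _ _)

theorem AddMonoidHom.preimage_add_vadd_coset {A B : Type*} [AddGroup A] [AddGroup B]
    (f : A →+ B) (t : B) {b : B} {H : AddSubgroup B} {u : A}
    (hu : t + f u ∈ b +ᵥ (H : Set B)) :
    (fun n ↦ t + f n) ⁻¹' (b +ᵥ (H : Set B)) = u +ᵥ (H.comap f : Set A) := by
  ext n
  rw [Set.mem_preimage, mem_leftAddCoset_iff, mem_leftAddCoset_iff, SetLike.mem_coe,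
    SetLike.mem_coe, AddSubgroup.mem_comap, map_add, map_neg]
  rw [mem_leftAddCoset_iff, SetLike.mem_coe] at hu
  have : -b + (t + f n) = (-b + (t + f u)) + (-f u + f n) := by simp [add_assoc]
  rw [this, add_mem_cancel_left hu]

namespace AddSubgroup

theorem neg_add_mem_sup_of_inter_nonempty {G : Type*} [AddCommGroup G] {H K : AddSubgroup G}
    {a b x : G} (hab : ((a +ᵥ (H : Set G)) ∩ (b +ᵥ (K : Set G))).Nonempty)
    (hx : x ∈ b +ᵥ (K : Set G)) :
    -a + x ∈ H ⊔ K := by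
  obtain ⟨y, hya, hyb⟩ := hab
  rw [mem_leftAddCoset_iff] at hya hyb hx
  have : -a + x = (-a + y) + (-(-b + y) + (-b + x)) := by abel
  rw [this]
  exact add_mem (mem_sup_left hya) (mem_sup_right (add_mem (neg_mem hyb) hx))

theorem biInter_vadd_nonempty_of_pairwise {G : Type*} [AddCommGroup G]
    (hG : ∀ H K L : AddSubgroup G, (H ⊔ K) ⊓ (H ⊔ L) ≤ H ⊔ K ⊓ L)
    {ι : Type*} (s : Finset ι) (a : ι → G) (H : ι → AddSubgroup G)
    (h : ∀ i ∈ s, ∀ j ∈ s, ((a i +ᵥ (H i : Set G)) ∩ (a j +ᵥ (H j : Set G))).Nonempty) :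
    (⋂ i ∈ s, a i +ᵥ (H i : Set G)).Nonempty := by
  classical
  induction s using Finset.induction_on with
  | empty => simp
  | insert i s _ ih =>
    obtain ⟨x, hx⟩ := ih fun j hj k hk ↦ h j (by simp [hj]) k (by simp [hk])
    simp only [Set.mem_iInter] at hx
    have hxi : -a i + x ∈ H i ⊔ s.inf H := by
      refine Finset.inf_sup_le_sup_inf (hG (H i)) s H ?_
      rw [Finset.inf_eq_iInf]
      simp only [mem_iInf]
      exact fun j hj ↦ neg_add_mem_sup_of_inter_nonempty (h i (by simp) j (by simp [hj])) (hx j hj)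
    -- moving `x` by the `s.inf H`-component of `-a i + x` keeps it in every `a j + H j`
    obtain ⟨u, hu, v, hv, huv⟩ := mem_sup.mp hxi
    rw [Finset.inf_eq_iInf] at hv
    simp only [mem_iInf] at hv
    refine ⟨x - v, ?_⟩
    simp only [Finset.set_biInter_insert, Set.mem_inter_iff, Set.mem_iInter, mem_leftAddCoset_iff]
    refine ⟨?_, fun j hj ↦ ?_⟩
    · rwa [show -a i + (x - v) = u by rw [← add_sub_assoc, ← huv]; abel]
    · rw [← add_sub_assoc]
      exact sub_mem (mem_leftAddCoset_iff _ |>.mp (hx j hj)) (hv j hj)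

theorem iInter_vadd_nonempty_of_zmultiples {G ι : Type*} [AddGroup G] [Fintype ι]
    (a : ι → G) (H : ι → AddSubgroup G) {i₀ : ι} {g : G} (hi₀ : H i₀ = zmultiples g)
    (h : ∀ i j, ((a i +ᵥ (H i : Set G)) ∩ (a j +ᵥ (H j : Set G)) ∩
      (a i₀ +ᵥ (H i₀ : Set G))).Nonempty) :
    (⋂ i, a i +ᵥ (H i : Set G)).Nonempty := by
  set φ : ℤ → G := fun n ↦ a i₀ + zmultiplesHom G g n
  have mem_range : ∀ {p}, p ∈ a i₀ +ᵥ (H i₀ : Set G) → ∃ n, φ n = p := by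
    intro p hp
    rw [hi₀, mem_leftAddCoset_iff] at hp
    obtain ⟨n, hn⟩ := hp
    exact ⟨n, by simp [φ, hn]⟩
  have hpre : ∀ i, ∃ u : ℤ,
      φ ⁻¹' (a i +ᵥ (H i : Set G)) = u +ᵥ ((H i).comap (zmultiplesHom G g) : Set ℤ) := by
    intro i
    obtain ⟨p, ⟨hpi, -⟩, hp₀⟩ := h i i
    obtain ⟨u, rfl⟩ := mem_range hp₀
    exact ⟨u, AddMonoidHom.preimage_add_vadd_coset _ _ hpi⟩
  choose u hu using hpre
  obtain ⟨n, hn⟩ := biInter_vadd_nonempty_of_pairwise Int.addSubgroup_sup_inf_le Finset.univ u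
    (fun i ↦ (H i).comap (zmultiplesHom G g)) fun i _ j _ ↦ by
      obtain ⟨p, ⟨hpi, hpj⟩, hp₀⟩ := h i j
      obtain ⟨k, rfl⟩ := mem_range hp₀
      exact ⟨k, by rw [← hu i]; exact hpi, by rw [← hu j]; exact hpj⟩
  refine ⟨φ n, Set.mem_iInter.mpr fun i ↦ ?_⟩
  have := Set.mem_iInter₂.mp hn i (Finset.mem_univ i)
  rwa [← hu i] at this

end AddSubgroup

theorem Real.addSubgroup_eq_top_or_eq_zmultiples {H : AddSubgroup ℝ}
    (hH : IsClosed (H : Set ℝ)) : H = ⊤ ∨ ∃ g, H = AddSubgroup.zmultiples g := by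
  rcases H.dense_or_cyclic with hd | ⟨g, rfl⟩
  · left
    rw [← AddSubgroup.coe_eq_univ, ← hH.closure_eq, hd.closure_eq]
  · exact Or.inr ⟨g, (AddSubgroup.zmultiples_eq_closure g).symm⟩

/-- Let `C_1, …, C_m` be closed cosets in the additive topological group
`(ℝ, +)` (translates of closed additive subgroups of `ℝ`).  If every subfamily
of at most `3` of the cosets has nonempty intersection, then the whole family
has nonempty intersection.  In other words, `κ(ℝ) ≤ 3`. -/
theorem real_helly_three (m : ℕ) (C : Fin m → Set ℝ)
    (hcoset : ∀ i, ∃ (a : ℝ) (H : AddSubgroup ℝ),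
      IsClosed (H : Set ℝ) ∧ C i = a +ᵥ (H : Set ℝ))
    (h3 : ∀ s : Finset (Fin m), s.card ≤ 3 → (⋂ i ∈ s, C i).Nonempty) :
    (⋂ i, C i).Nonempty := by
  choose a H hH hC using hcoset
  obtain rfl : C = fun i ↦ a i +ᵥ (H i : Set ℝ) := funext hC
  by_cases hcyc : ∃ i₀ g, H i₀ = AddSubgroup.zmultiples g
  · obtain ⟨i₀, g, hi₀⟩ := hcyc
    refine AddSubgroup.iInter_vadd_nonempty_of_zmultiples a H hi₀ fun i j ↦ ?_
    classical
    simpa [Set.inter_assoc] using h3 {i, j, i₀} Finset.card_le_three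
  · push Not at hcyc
    have htop : ∀ i, H i = ⊤ := fun i ↦
      (Real.addSubgroup_eq_top_or_eq_zmultiples (hH i)).resolve_right (by simpa using hcyc i)
    simp [htop]
end

section
/- Consider in the additive group (ℝ, +) the three closed cosets C_1 = ℤ, C_2 = {n√2 : n ∈ ℤ}, and C_3 = {1 + n(√2 − 1) : n ∈ ℤ}. Then C_1 ∩ C_2 = {0}, C_1 ∩ C_3 = {1}, C_2 ∩ C_3 = {√2}, and C_1 ∩ C_2 ∩ C_3 = ∅. In particular, any two of these cosets intersect but all three have empty intersection, so κ(ℝ) ≥ 3. -/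
/-!
Since `√2` is irrational, an equation `m = n√2` with integers `m, n` forces `m = n = 0`;
comparing coefficients this way shows that any two of the three cosets meet in exactly one
point. These points `0`, `1`, `√2` are distinct, so the three cosets have no common point.
A system of closed cosets with empty intersection all of whose proper subsystems intersect
has no emptily intersecting subsystem of smaller size, so its size bounds `κ` from below.
-/

open Pointwise

/-- `C` is a closed coset in the additive topological group `G`, i.e. a set of
the form `a + H` for some closed additive subgroup `H` of `G`. -/
def IsClosedAddCoset {G : Type*} [AddGroup G] [TopologicalSpace G] (C : Set G) : Prop :=
  ∃ (a : G) (H : AddSubgroup G), IsClosed (H : Set G) ∧ C = a +ᵥ (H : Set G)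

/-- `d` is a Helly bound for the additive topological group `G`: every finite
system of closed cosets of `G` with empty intersection contains a subsystem of
at most `d` cosets with empty intersection. -/
def IsClosedAddHellyBound (G : Type*) [AddGroup G] [TopologicalSpace G] (d : ℕ) : Prop :=
  ∀ (m : ℕ) (C : Fin m → Set G), (∀ i, IsClosedAddCoset (C i)) → (⋂ i, C i) = ∅ →
    ∃ s : Finset (Fin m), s.card ≤ d ∧ (⋂ i ∈ s, C i) = ∅

/-- The Helly dimension `κ(G)` of an additive topological group `G`. -/
noncomputable def topAddHellyDim (G : Type*) [AddGroup G] [TopologicalSpace G] : ℕ∞ :=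
  sInf {d : ℕ∞ | ∃ n : ℕ, d = (n : ℕ∞) ∧ IsClosedAddHellyBound G n}

theorem Irrational.eq_zero_of_intCast_eq_mul {x : ℝ} (hx : Irrational x) {m n : ℤ}
    (h : (m : ℝ) = n * x) : m = 0 ∧ n = 0 := by
  obtain rfl : n = 0 := by
    by_contra hn
    exact (hx.intCast_mul hn).ne_int m h.symm
  exact ⟨by exact_mod_cast (by simpa using h : (m : ℝ) = 0), rfl⟩

theorem isClosedAddCoset_setOf_add_int_mul (a b : ℝ) :
    IsClosedAddCoset {x : ℝ | ∃ n : ℤ, x = b + n * a} := by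
  refine ⟨b, AddSubgroup.zmultiples a, AddSubgroup.isClosed_of_discrete, ?_⟩
  ext x
  simp only [Set.mem_ofPred_eq, Set.mem_vadd_set, SetLike.mem_coe,
    AddSubgroup.mem_zmultiples_iff, vadd_eq_add, zsmul_eq_mul, exists_exists_eq_and]
  exact exists_congr fun n => eq_comm

theorem ints_inter_sqrt_two_ints :
    {x : ℝ | ∃ n : ℤ, x = n} ∩ {x : ℝ | ∃ n : ℤ, x = n * √2} = {0} := by
  ext x
  simp only [Set.mem_inter_iff, Set.mem_ofPred_eq, Set.mem_singleton_iff]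
  constructor
  · rintro ⟨⟨m, rfl⟩, n, h⟩
    simp [(irrational_sqrt_two.eq_zero_of_intCast_eq_mul h).1]
  · rintro rfl
    exact ⟨⟨0, by simp⟩, 0, by simp⟩

theorem ints_inter_one_add_sqrt_two_sub_one_ints :
    {x : ℝ | ∃ n : ℤ, x = n} ∩ {x : ℝ | ∃ n : ℤ, x = 1 + n * (√2 - 1)} = {1} := by
  ext x
  simp only [Set.mem_inter_iff, Set.mem_ofPred_eq, Set.mem_singleton_iff]
  constructor
  · rintro ⟨⟨m, rfl⟩, n, h⟩
    have h' : ((m - 1 + n : ℤ) : ℝ) = n * √2 := by push_cast; linarith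
    obtain rfl := (irrational_sqrt_two.eq_zero_of_intCast_eq_mul h').2
    simpa using h
  · rintro rfl
    exact ⟨⟨1, by simp⟩, 0, by simp⟩

theorem sqrt_two_ints_inter_one_add_sqrt_two_sub_one_ints :
    {x : ℝ | ∃ n : ℤ, x = n * √2} ∩ {x : ℝ | ∃ n : ℤ, x = 1 + n * (√2 - 1)} = {√2} := by
  ext x
  simp only [Set.mem_inter_iff, Set.mem_ofPred_eq, Set.mem_singleton_iff]
  constructor
  · rintro ⟨⟨m, rfl⟩, n, h⟩
    have h' : ((1 - n : ℤ) : ℝ) = (m - n : ℤ) * √2 := by push_cast; linarith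
    obtain ⟨hn, hm⟩ := irrational_sqrt_two.eq_zero_of_intCast_eq_mul h'
    obtain rfl : m = 1 := by omega
    simp
  · rintro rfl
    exact ⟨⟨1, by simp⟩, 1, by simp⟩

theorem le_topAddHellyDim_of_iInter_eq_empty {G : Type*} [AddGroup G] [TopologicalSpace G]
    {m : ℕ} (C : Fin m → Set G) (hC : ∀ i, IsClosedAddCoset (C i)) (hempty : ⋂ i, C i = ∅)
    (hmin : ∀ i, (⋂ (j) (_ : j ≠ i), C j).Nonempty) : (m : ℕ∞) ≤ topAddHellyDim G := by
  refine le_sInf ?_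
  rintro _ ⟨d, rfl, hd⟩
  obtain ⟨s, hcard, hs⟩ := hd m C hC hempty
  have hs_univ : s = Finset.univ := Finset.eq_univ_of_forall fun i => by
    by_contra hi
    obtain ⟨x, hx⟩ := hmin i
    have hxs : x ∈ ⋂ j ∈ s, C j :=
      Set.mem_iInter₂.2 fun j hj => Set.mem_iInter₂.1 hx j (ne_of_mem_of_not_mem hj hi)
    simp [hs] at hxs
  subst hs_univ
  simpa using hcard

theorem three_le_topAddHellyDim {G : Type*} [AddGroup G] [TopologicalSpace G] (A B C : Set G)
    (hA : IsClosedAddCoset A) (hB : IsClosedAddCoset B) (hC : IsClosedAddCoset C)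
    (hAB : (A ∩ B).Nonempty) (hAC : (A ∩ C).Nonempty) (hBC : (B ∩ C).Nonempty)
    (hABC : A ∩ B ∩ C = ∅) : 3 ≤ topAddHellyDim G := by
  refine le_topAddHellyDim_of_iInter_eq_empty ![A, B, C] (by simp [Fin.forall_fin_succ, *]) ?_ ?_
  · ext x
    simp [Fin.forall_fin_succ, ← hABC, and_assoc]
  · intro i
    fin_cases i
      <;> [refine hBC.mono ?_; refine hAC.mono ?_; refine hAB.mono ?_]
      <;> exact fun x hx => Set.mem_iInter₂.2 fun j hj => by fin_cases j <;> simp_all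

/-- The three closed cosets `C_1 = ℤ`, `C_2 = √2·ℤ` and `C_3 = 1 + (√2 − 1)·ℤ`
of `(ℝ, +)` satisfy `C_1 ∩ C_2 = {0}`, `C_1 ∩ C_3 = {1}`, `C_2 ∩ C_3 = {√2}`
and `C_1 ∩ C_2 ∩ C_3 = ∅`; in particular any two of them intersect while all
three have empty intersection, so `κ(ℝ) ≥ 3`. -/
theorem real_helly_lower_bound (C₁ C₂ C₃ : Set ℝ)
    (hC₁ : C₁ = {x : ℝ | ∃ n : ℤ, x = (n : ℝ)})
    (hC₂ : C₂ = {x : ℝ | ∃ n : ℤ, x = (n : ℝ) * Real.sqrt 2})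
    (hC₃ : C₃ = {x : ℝ | ∃ n : ℤ, x = 1 + (n : ℝ) * (Real.sqrt 2 - 1)}) :
    C₁ ∩ C₂ = {0} ∧ C₁ ∩ C₃ = {1} ∧ C₂ ∩ C₃ = {Real.sqrt 2} ∧
    C₁ ∩ C₂ ∩ C₃ = ∅ ∧ 3 ≤ topAddHellyDim ℝ := by
  have h₁₂ : C₁ ∩ C₂ = {0} := hC₁ ▸ hC₂ ▸ ints_inter_sqrt_two_ints
  have h₁₃ : C₁ ∩ C₃ = {1} := hC₁ ▸ hC₃ ▸ ints_inter_one_add_sqrt_two_sub_one_ints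
  have h₂₃ : C₂ ∩ C₃ = {√2} := hC₂ ▸ hC₃ ▸ sqrt_two_ints_inter_one_add_sqrt_two_sub_one_ints
  have h₁₂₃ : C₁ ∩ C₂ ∩ C₃ = ∅ := Set.eq_empty_of_forall_notMem fun x ⟨⟨h₁, h₂⟩, h₃⟩ =>
    zero_ne_one ((h₁₂.subset ⟨h₁, h₂⟩).symm.trans (h₁₃.subset ⟨h₁, h₃⟩))
  have hcoset₁ : IsClosedAddCoset C₁ := by
    simpa [hC₁] using isClosedAddCoset_setOf_add_int_mul 1 0
  have hcoset₂ : IsClosedAddCoset C₂ := by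
    simpa [hC₂] using isClosedAddCoset_setOf_add_int_mul √2 0
  have hcoset₃ : IsClosedAddCoset C₃ := hC₃ ▸ isClosedAddCoset_setOf_add_int_mul (√2 - 1) 1
  refine ⟨h₁₂, h₁₃, h₂₃, h₁₂₃,
    three_le_topAddHellyDim C₁ C₂ C₃ hcoset₁ hcoset₂ hcoset₃ ?_ ?_ ?_ h₁₂₃⟩
  all_goals simp [h₁₂, h₁₃, h₂₃]
end
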